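/- arXiv:2301.01977 — 3 statements merged into one kernel-verified Lean document; each statement's English description precedes it below -/
import Mathlib

section
/- (Triangle heuristic is an upper bound.) Let c ≥ 0, let x = (x_1,…,x_m) and y = (y_1,…,y_n) be time series with m ≥ n, let q ∈ ℝ, and let q^(m), q^(n) be the constant time series of lengths m and n with all points equal to q. Then d(x,y) ≤ d(x, q^(m)) + d(y, q^(n)) + (m − n)·c. -/
/-- The MSM split/merge cost function `C(u, v, w)`: it is `c` if `u` lies
between `v` and `w`, and `c + min(|u-v|, |u-w|)` otherwise. -/
noncomputable def msmC (c u v w : ℝ) : ℝ :=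
  if (v ≤ u ∧ u ≤ w) ∨ (w ≤ u ∧ u ≤ v) then c else c + min |u - v| |u - w|

/-- The MSM dynamic-programming table `D[i,j]` (1-based indices) for the time
series given by the values of `x`, `y : ℕ → ℝ` at indices `1, 2, …`;
values at row/column `0` are junk.  The MSM distance between
`(x 1, …, x m)` and `(y 1, …, y n)` is `msmD c x y m n`. -/
noncomputable def msmD (c : ℝ) (x y : ℕ → ℝ) : ℕ → ℕ → ℝ
  | 0, _ => 0
  | _ + 1, 0 => 0
  | 1, 1 => |x 1 - y 1|
  | i + 2, 1 => msmD c x y (i + 1) 1 + msmC c (x (i + 2)) (x (i + 1)) (y 1)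
  | 1, j + 2 => msmD c x y 1 (j + 1) + msmC c (y (j + 2)) (x 1) (y (j + 1))
  | i + 2, j + 2 =>
      min (msmD c x y (i + 1) (j + 1) + |x (i + 2) - y (j + 2)|)
        (min (msmD c x y (i + 1) (j + 2) + msmC c (x (i + 2)) (x (i + 1)) (y (j + 2)))
          (msmD c x y (i + 2) (j + 1) + msmC c (y (j + 2)) (x (i + 2)) (y (j + 1))))
  termination_by i j => (i, j)

set_option linter.unusedTactic false

lemma msmC_comm (c u v w : ℝ) : msmC c u v w = msmC c u w v := by
  unfold msmC
  rw [min_comm]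
  split_ifs with h1 h2 <;> first | rfl | tauto

lemma msmC_qq (c v q : ℝ) : msmC c q v q = c := by
  unfold msmC
  rw [if_pos]
  rcases le_total v q with h | h
  · exact Or.inl ⟨h, le_refl q⟩
  · exact Or.inr ⟨le_refl q, h⟩

private lemma notBetween {s t a : ℝ} (h : ¬((t ≤ s ∧ s ≤ a) ∨ (a ≤ s ∧ s ≤ t))) :
    (t ≤ s ∧ a < s) ∨ (s ≤ t ∧ s < a) := by
  rcases le_total t s with p | p
  · refine Or.inl ⟨p, ?_⟩
    by_contra hc; push_neg at hc; exact h (Or.inl ⟨p, hc⟩)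
  · refine Or.inr ⟨p, ?_⟩
    by_contra hc; push_neg at hc; exact h (Or.inr ⟨hc, p⟩)

set_option maxHeartbeats 4000000 in
lemma msmC_step (c s t a q : ℝ) :
    msmC c s t a ≤ msmC c s t q + ((|s - a| - |s - q|) - (|t - a| - |t - q|)) / 2 := by
  unfold msmC
  by_cases hb1 : (t ≤ s ∧ s ≤ a) ∨ (a ≤ s ∧ s ≤ t) <;>
    by_cases hb2 : (t ≤ s ∧ s ≤ q) ∨ (q ≤ s ∧ s ≤ t)
  · rw [if_pos hb1, if_pos hb2]
    rcases hb1 with ⟨u1, u2⟩ | ⟨u1, u2⟩ <;> rcases hb2 with ⟨w1, w2⟩ | ⟨w1, w2⟩ <;>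
      rcases abs_cases (s - a) with ⟨e2, f2⟩ | ⟨e2, f2⟩ <;>
      rcases abs_cases (s - q) with ⟨e3, f3⟩ | ⟨e3, f3⟩ <;>
      rcases abs_cases (t - a) with ⟨e4, f4⟩ | ⟨e4, f4⟩ <;>
      rcases abs_cases (t - q) with ⟨e5, f5⟩ | ⟨e5, f5⟩ <;> linarith
  · rw [if_pos hb1, if_neg hb2]
    rcases notBetween hb2 with ⟨p1, p3⟩ | ⟨p1, p3⟩ <;>
      rcases hb1 with ⟨u1, u2⟩ | ⟨u1, u2⟩ <;>
      rcases min_cases (|s - t|) (|s - q|) with ⟨hm, hc⟩ | ⟨hm, hc⟩ <;> rw [hm] <;>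
      rcases abs_cases (s - t) with ⟨e1, f1⟩ | ⟨e1, f1⟩ <;>
      rcases abs_cases (s - a) with ⟨e2, f2⟩ | ⟨e2, f2⟩ <;>
      rcases abs_cases (s - q) with ⟨e3, f3⟩ | ⟨e3, f3⟩ <;>
      rcases abs_cases (t - a) with ⟨e4, f4⟩ | ⟨e4, f4⟩ <;>
      rcases abs_cases (t - q) with ⟨e5, f5⟩ | ⟨e5, f5⟩ <;> linarith
  · rw [if_neg hb1, if_pos hb2]
    rcases notBetween hb1 with ⟨p1, p2⟩ | ⟨p1, p2⟩ <;>
      rcases hb2 with ⟨w1, w2⟩ | ⟨w1, w2⟩ <;>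
      rcases min_cases (|s - t|) (|s - a|) with ⟨hm, hc⟩ | ⟨hm, hc⟩ <;> rw [hm] <;>
      rcases abs_cases (s - t) with ⟨e1, f1⟩ | ⟨e1, f1⟩ <;>
      rcases abs_cases (s - a) with ⟨e2, f2⟩ | ⟨e2, f2⟩ <;>
      rcases abs_cases (s - q) with ⟨e3, f3⟩ | ⟨e3, f3⟩ <;>
      rcases abs_cases (t - a) with ⟨e4, f4⟩ | ⟨e4, f4⟩ <;>
      rcases abs_cases (t - q) with ⟨e5, f5⟩ | ⟨e5, f5⟩ <;> linarith
  · rw [if_neg hb1, if_neg hb2]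
    rcases notBetween hb1 with ⟨p1, p2⟩ | ⟨p1, p2⟩ <;>
      rcases notBetween hb2 with ⟨p1', p3⟩ | ⟨p1', p3⟩ <;>
      rcases min_cases (|s - t|) (|s - a|) with ⟨hm, hc⟩ | ⟨hm, hc⟩ <;> rw [hm] <;>
      rcases min_cases (|s - t|) (|s - q|) with ⟨hm2, hc2⟩ | ⟨hm2, hc2⟩ <;> rw [hm2] <;>
      rcases abs_cases (s - t) with ⟨e1, f1⟩ | ⟨e1, f1⟩ <;>
      rcases abs_cases (s - a) with ⟨e2, f2⟩ | ⟨e2, f2⟩ <;>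
      rcases abs_cases (s - q) with ⟨e3, f3⟩ | ⟨e3, f3⟩ <;>
      rcases abs_cases (t - a) with ⟨e4, f4⟩ | ⟨e4, f4⟩ <;>
      rcases abs_cases (t - q) with ⟨e5, f5⟩ | ⟨e5, f5⟩ <;> linarith

set_option maxHeartbeats 4000000 in
lemma msmC_b2 (c s v t q : ℝ) :
    msmC c s v t ≤ c + (|s - q| + |s - v| + |t - q| - |t - v|) / 2 := by
  unfold msmC
  by_cases hb1 : (v ≤ s ∧ s ≤ t) ∨ (t ≤ s ∧ s ≤ v)
  · rw [if_pos hb1]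
    rcases hb1 with ⟨u1, u2⟩ | ⟨u1, u2⟩ <;>
      rcases abs_cases (s - v) with ⟨e1, f1⟩ | ⟨e1, f1⟩ <;>
      rcases abs_cases (s - q) with ⟨e3, f3⟩ | ⟨e3, f3⟩ <;>
      rcases abs_cases (t - v) with ⟨e4, f4⟩ | ⟨e4, f4⟩ <;>
      rcases abs_cases (t - q) with ⟨e5, f5⟩ | ⟨e5, f5⟩ <;> linarith
  · rw [if_neg hb1]
    rcases notBetween (s := s) (t := v) (a := t) (by tauto) with ⟨p1, p2⟩ | ⟨p1, p2⟩ <;>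
      rcases min_cases (|s - v|) (|s - t|) with ⟨hm, hc⟩ | ⟨hm, hc⟩ <;> rw [hm] <;>
      rcases abs_cases (s - v) with ⟨e1, f1⟩ | ⟨e1, f1⟩ <;>
      rcases abs_cases (s - t) with ⟨e2, f2⟩ | ⟨e2, f2⟩ <;>
      rcases abs_cases (s - q) with ⟨e3, f3⟩ | ⟨e3, f3⟩ <;>
      rcases abs_cases (t - v) with ⟨e4, f4⟩ | ⟨e4, f4⟩ <;>
      rcases abs_cases (t - q) with ⟨e5, f5⟩ | ⟨e5, f5⟩ <;> linarith

lemma msmD_one_row (c q : ℝ) (x : ℕ → ℝ) :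
    ∀ k : ℕ, msmD c x (fun _ => q) 1 (k + 1) = |x 1 - q| + k * c := by
  intro k
  induction k with
  | zero => rw [msmD]; simp
  | succ k ih =>
      have h2 : (k : ℕ) + 1 + 1 = k + 2 := rfl
      rw [h2, msmD, ih, msmC_qq]
      push_cast; ring

private lemma tri (q a b : ℝ) : |a - b| ≤ |a - q| + |b - q| := by
  have h := abs_sub_le a q b
  rw [abs_sub_comm q b] at h
  exact h

private lemma absK (a b : ℝ) : |a - b| ≤ |a - (b + 1)| + 1 := by
  rcases abs_cases (a - b) with ⟨e1, f1⟩ | ⟨e1, f1⟩ <;>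
    rcases abs_cases (a - (b + 1)) with ⟨e2, f2⟩ | ⟨e2, f2⟩ <;> linarith

private lemma absK' (a b : ℝ) : |a - b| ≤ |a + 1 - b| + 1 := by
  rcases abs_cases (a - b) with ⟨e1, f1⟩ | ⟨e1, f1⟩ <;>
    rcases abs_cases (a + 1 - b) with ⟨e2, f2⟩ | ⟨e2, f2⟩ <;> linarith

lemma msm_key00 (c q : ℝ) (hc : 0 ≤ c) (x y : ℕ → ℝ) (k l : ℕ) :
    msmD c x y 1 1 ≤ msmD c x (fun _ => q) 1 (k + 1) + msmD c y (fun _ => q) 1 (l + 1)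
      + |(k : ℝ) - (l : ℝ)| * c + (|x 1 - y 1| - |x 1 - q| - |y 1 - q|) / 2 := by
  rw [msmD, msmD_one_row, msmD_one_row]
  have h1 := tri q (x 1) (y 1)
  have h2 : 0 ≤ (k : ℝ) * c := mul_nonneg (Nat.cast_nonneg k) hc
  have h3 : 0 ≤ (l : ℝ) * c := mul_nonneg (Nat.cast_nonneg l) hc
  have h4 : 0 ≤ |(k : ℝ) - (l : ℝ)| * c := mul_nonneg (abs_nonneg _) hc
  linarith

lemma msm_key (c q : ℝ) (hc : 0 ≤ c) (x y : ℕ → ℝ) :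
    ∀ s i j k l : ℕ, i + j + k + l ≤ s →
      msmD c x y (i + 1) (j + 1) ≤
        msmD c x (fun _ => q) (i + 1) (k + 1) + msmD c y (fun _ => q) (j + 1) (l + 1)
        + |(k : ℝ) - (l : ℝ)| * c
        + (|x (i + 1) - y (j + 1)| - |x (i + 1) - q| - |y (j + 1) - q|) / 2 := by
  intro s
  induction s with
  | zero =>
      intro i j k l hs
      obtain ⟨rfl, rfl, rfl, rfl⟩ : i = 0 ∧ j = 0 ∧ k = 0 ∧ l = 0 := by omega
      exact msm_key00 c q hc x y 0 0
  | succ s IH =>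
      intro i j k l hs
      have hKnn : 0 ≤ |(k : ℝ) - (l : ℝ)| * c := mul_nonneg (abs_nonneg _) hc
      rcases i with _ | i <;> rcases j with _ | j
      · exact msm_key00 c q hc x y k l
      · -- i = 0, j = j+1 : row case
        have hD : msmD c x y 1 (j + 2)
            = msmD c x y 1 (j + 1) + msmC c (y (j + 2)) (x 1) (y (j + 1)) := by rw [msmD]
        have hcomm : msmC c (y (j + 2)) (x 1) (y (j + 1))
            = msmC c (y (j + 2)) (y (j + 1)) (x 1) := msmC_comm _ _ _ _
        rcases l with _ | l
        · -- l = 0 : F single merge-type branch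
          have hF : msmD c y (fun _ => q) (j + 2) 1
              = msmD c y (fun _ => q) (j + 1) 1 + msmC c (y (j + 2)) (y (j + 1)) q := by
            rw [msmD]
          have hIH := IH 0 j k 0 (by omega)
          have hstep := msmC_step c (y (j + 2)) (y (j + 1)) (x 1) q
          have ht1 := abs_sub_comm (y (j + 2)) (x 1)
          have ht2 := abs_sub_comm (y (j + 1)) (x 1)
          rw [hD, hF, hcomm]
          linarith
        · -- l = l+1 : unfold F as a min
          have hF : msmD c y (fun _ => q) (j + 2) (l + 2)
              = min (msmD c y (fun _ => q) (j + 1) (l + 1) + |y (j + 2) - q|)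
                  (min (msmD c y (fun _ => q) (j + 1) (l + 2) + msmC c (y (j + 2)) (y (j + 1)) q)
                    (msmD c y (fun _ => q) (j + 2) (l + 1) + msmC c q (y (j + 2)) q)) := by
            rw [msmD]
          rw [hF]
          rcases min_cases (msmD c y (fun _ => q) (j + 1) (l + 1) + |y (j + 2) - q|)
              (min (msmD c y (fun _ => q) (j + 1) (l + 2) + msmC c (y (j + 2)) (y (j + 1)) q)
                (msmD c y (fun _ => q) (j + 2) (l + 1) + msmC c q (y (j + 2)) q)) with
            ⟨hm1, _⟩ | ⟨hm1, _⟩ <;> rw [hm1]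
          · -- branch F1
            have hb2 := msmC_b2 c (y (j + 2)) (x 1) (y (j + 1)) q
            have ht1 := abs_sub_comm (y (j + 2)) (x 1)
            have ht2 := abs_sub_comm (y (j + 1)) (x 1)
            rcases k with _ | k
            · have hIH := IH 0 j 0 l (by omega)
              have hv1 : |(0 : ℝ) - (l : ℝ)| = (l : ℝ) := by
                rw [zero_sub, abs_neg, abs_of_nonneg (Nat.cast_nonneg l)]
              have hv2 : |(0 : ℝ) - ((l : ℕ) + 1 : ℝ)| = (l : ℝ) + 1 := by
                rw [zero_sub, abs_neg, abs_of_nonneg]; positivity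
              rw [hD]
              push_cast at hIH hv1 hv2 ⊢
              rw [hv1] at hIH
              rw [hv2]
              linarith
            · have hIH := IH 0 j k l (by omega)
              have hE2 : msmD c x (fun _ => q) 1 (k + 2) = |x 1 - q| + ((k : ℝ) + 1) * c := by
                have := msmD_one_row c q x (k + 1); push_cast at this ⊢; rw [this]
              have hE1 : msmD c x (fun _ => q) 1 (k + 1) = |x 1 - q| + (k : ℝ) * c :=
                msmD_one_row c q x k
              have hv : |((k : ℕ) + 1 : ℝ) - ((l : ℕ) + 1 : ℝ)| = |(k : ℝ) - (l : ℝ)| := by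
                push_cast; ring_nf
              rw [hD]
              push_cast at hIH hE2 hE1 hv ⊢
              rw [hv, hE2]
              rw [hE1] at hIH
              linarith
          · -- min F2 F3
            rcases min_cases
                (msmD c y (fun _ => q) (j + 1) (l + 2) + msmC c (y (j + 2)) (y (j + 1)) q)
                (msmD c y (fun _ => q) (j + 2) (l + 1) + msmC c q (y (j + 2)) q) with
              ⟨hm2, _⟩ | ⟨hm2, _⟩ <;> rw [hm2]
            · -- branch F2
              have hIH := IH 0 j k (l + 1) (by omega)
              have hstep := msmC_step c (y (j + 2)) (y (j + 1)) (x 1) q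
              have ht1 := abs_sub_comm (y (j + 2)) (x 1)
              have ht2 := abs_sub_comm (y (j + 1)) (x 1)
              rw [hD, hcomm]
              push_cast at hIH ⊢
              linarith
            · -- branch F3
              have hIH := IH 0 (j + 1) k l (by omega)
              rw [msmC_qq]
              have habs : |(k : ℝ) - (l : ℝ)| ≤ |(k : ℝ) - ((l : ℝ) + 1)| + 1 := absK _ _
              have habs' : |(k : ℝ) - ((l : ℝ) + 1)| * c ≥ |(k : ℝ) - (l : ℝ)| * c - c := by
                nlinarith [mul_le_mul_of_nonneg_right habs hc]
              push_cast at hIH ⊢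
              linarith
      · -- i = i+1, j = 0 : column case
        have hD : msmD c x y (i + 2) 1
            = msmD c x y (i + 1) 1 + msmC c (x (i + 2)) (x (i + 1)) (y 1) := by rw [msmD]
        rcases k with _ | k
        · -- k = 0 : E single merge-type
          have hE : msmD c x (fun _ => q) (i + 2) 1
              = msmD c x (fun _ => q) (i + 1) 1 + msmC c (x (i + 2)) (x (i + 1)) q := by
            rw [msmD]
          have hIH := IH i 0 0 l (by omega)
          have hstep := msmC_step c (x (i + 2)) (x (i + 1)) (y 1) q
          rw [hD, hE]
          linarith
        · -- k = k+1 : unfold E as a min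
          have hE : msmD c x (fun _ => q) (i + 2) (k + 2)
              = min (msmD c x (fun _ => q) (i + 1) (k + 1) + |x (i + 2) - q|)
                  (min (msmD c x (fun _ => q) (i + 1) (k + 2) + msmC c (x (i + 2)) (x (i + 1)) q)
                    (msmD c x (fun _ => q) (i + 2) (k + 1) + msmC c q (x (i + 2)) q)) := by
            rw [msmD]
          rw [hE]
          rcases min_cases (msmD c x (fun _ => q) (i + 1) (k + 1) + |x (i + 2) - q|)
              (min (msmD c x (fun _ => q) (i + 1) (k + 2) + msmC c (x (i + 2)) (x (i + 1)) q)
                (msmD c x (fun _ => q) (i + 2) (k + 1) + msmC c q (x (i + 2)) q)) with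
            ⟨hm1, _⟩ | ⟨hm1, _⟩ <;> rw [hm1]
          · -- branch E1
            have hcomm : msmC c (x (i + 2)) (x (i + 1)) (y 1)
                = msmC c (x (i + 2)) (y 1) (x (i + 1)) := msmC_comm _ _ _ _
            have hb2 := msmC_b2 c (x (i + 2)) (y 1) (x (i + 1)) q
            rcases l with _ | l
            · have hIH := IH i 0 k 0 (by omega)
              have hv1 : |(k : ℝ) - (0 : ℝ)| = (k : ℝ) := by
                rw [sub_zero, abs_of_nonneg (Nat.cast_nonneg k)]
              have hv2 : |((k : ℕ) + 1 : ℝ) - (0 : ℝ)| = (k : ℝ) + 1 := by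
                rw [sub_zero, abs_of_nonneg]; positivity
              rw [hD, hcomm]
              push_cast at hIH hv1 hv2 ⊢
              rw [hv2]
              rw [hv1] at hIH
              linarith
            · have hIH := IH i 0 k l (by omega)
              have hF2 : msmD c y (fun _ => q) 1 (l + 2) = |y 1 - q| + ((l : ℝ) + 1) * c := by
                have := msmD_one_row c q y (l + 1); push_cast at this ⊢; rw [this]
              have hF1 : msmD c y (fun _ => q) 1 (l + 1) = |y 1 - q| + (l : ℝ) * c :=
                msmD_one_row c q y l
              have hv : |((k : ℕ) + 1 : ℝ) - ((l : ℕ) + 1 : ℝ)| = |(k : ℝ) - (l : ℝ)| := by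
                push_cast; ring_nf
              rw [hD, hcomm]
              push_cast at hIH hF2 hF1 hv ⊢
              rw [hv, hF2]
              rw [hF1] at hIH
              linarith
          · rcases min_cases
                (msmD c x (fun _ => q) (i + 1) (k + 2) + msmC c (x (i + 2)) (x (i + 1)) q)
                (msmD c x (fun _ => q) (i + 2) (k + 1) + msmC c q (x (i + 2)) q) with
              ⟨hm2, _⟩ | ⟨hm2, _⟩ <;> rw [hm2]
            · -- branch E2
              have hIH := IH i 0 (k + 1) l (by omega)
              have hstep := msmC_step c (x (i + 2)) (x (i + 1)) (y 1) q
              rw [hD]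
              push_cast at hIH ⊢
              linarith
            · -- branch E3
              have hIH := IH (i + 1) 0 k l (by omega)
              rw [msmC_qq]
              have habs : |(k : ℝ) - (l : ℝ)| ≤ |(k : ℝ) + 1 - (l : ℝ)| + 1 := absK' _ _
              have habs' : |(k : ℝ) + 1 - (l : ℝ)| * c ≥ |(k : ℝ) - (l : ℝ)| * c - c := by
                nlinarith [mul_le_mul_of_nonneg_right habs hc]
              push_cast at hIH ⊢
              linarith
      · -- i = i+1, j = j+1 : interior
        have hD : msmD c x y (i + 2) (j + 2)
            = min (msmD c x y (i + 1) (j + 1) + |x (i + 2) - y (j + 2)|)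
                (min (msmD c x y (i + 1) (j + 2) + msmC c (x (i + 2)) (x (i + 1)) (y (j + 2)))
                  (msmD c x y (i + 2) (j + 1) + msmC c (y (j + 2)) (x (i + 2)) (y (j + 1)))) := by
          rw [msmD]
        have hD1 : msmD c x y (i + 2) (j + 2)
            ≤ msmD c x y (i + 1) (j + 1) + |x (i + 2) - y (j + 2)| := by
          rw [hD]; exact min_le_left _ _
        have hD2 : msmD c x y (i + 2) (j + 2)
            ≤ msmD c x y (i + 1) (j + 2) + msmC c (x (i + 2)) (x (i + 1)) (y (j + 2)) := by
          rw [hD]; exact le_trans (min_le_right _ _) (min_le_left _ _)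
        have hD3 : msmD c x y (i + 2) (j + 2)
            ≤ msmD c x y (i + 2) (j + 1) + msmC c (y (j + 2)) (x (i + 2)) (y (j + 1)) := by
          rw [hD]; exact le_trans (min_le_right _ _) (min_le_right _ _)
        rcases k with _ | k
        · -- k = 0: E single merge-type; use hD2 for all l
          have hE : msmD c x (fun _ => q) (i + 2) 1
              = msmD c x (fun _ => q) (i + 1) 1 + msmC c (x (i + 2)) (x (i + 1)) q := by
            rw [msmD]
          have hIH := IH i (j + 1) 0 l (by omega)
          have hstep := msmC_step c (x (i + 2)) (x (i + 1)) (y (j + 2)) q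
          rw [hE]
          push_cast at hIH ⊢
          linarith
        · rcases l with _ | l
          · -- l = 0: F single merge-type; use hD3 for all k-branches
            have hF : msmD c y (fun _ => q) (j + 2) 1
                = msmD c y (fun _ => q) (j + 1) 1 + msmC c (y (j + 2)) (y (j + 1)) q := by
              rw [msmD]
            have hIH := IH (i + 1) j (k + 1) 0 (by omega)
            have hcomm : msmC c (y (j + 2)) (x (i + 2)) (y (j + 1))
                = msmC c (y (j + 2)) (y (j + 1)) (x (i + 2)) := msmC_comm _ _ _ _
            have hstep := msmC_step c (y (j + 2)) (y (j + 1)) (x (i + 2)) q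
            have ht1 := abs_sub_comm (y (j + 2)) (x (i + 2))
            have ht2 := abs_sub_comm (y (j + 1)) (x (i + 2))
            rw [hF]
            rw [hcomm] at hD3
            push_cast at hIH ⊢
            linarith
          · -- k = k+1, l = l+1 : full analysis; unfold F first
            have hF : msmD c y (fun _ => q) (j + 2) (l + 2)
                = min (msmD c y (fun _ => q) (j + 1) (l + 1) + |y (j + 2) - q|)
                    (min (msmD c y (fun _ => q) (j + 1) (l + 2) + msmC c (y (j + 2)) (y (j + 1)) q)
                      (msmD c y (fun _ => q) (j + 2) (l + 1) + msmC c q (y (j + 2)) q)) := by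
              rw [msmD]
            have hFle1 : msmD c y (fun _ => q) (j + 2) (l + 2)
                ≤ msmD c y (fun _ => q) (j + 1) (l + 1) + |y (j + 2) - q| := by
              rw [hF]; exact min_le_left _ _
            rw [hF]
            rcases min_cases (msmD c y (fun _ => q) (j + 1) (l + 1) + |y (j + 2) - q|)
                (min (msmD c y (fun _ => q) (j + 1) (l + 2) + msmC c (y (j + 2)) (y (j + 1)) q)
                  (msmD c y (fun _ => q) (j + 2) (l + 1) + msmC c q (y (j + 2)) q)) with
              ⟨hm1, _⟩ | ⟨hm1, _⟩ <;> rw [hm1]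
            · -- branch F1 : unfold E
              have hE : msmD c x (fun _ => q) (i + 2) (k + 2)
                  = min (msmD c x (fun _ => q) (i + 1) (k + 1) + |x (i + 2) - q|)
                      (min (msmD c x (fun _ => q) (i + 1) (k + 2)
                          + msmC c (x (i + 2)) (x (i + 1)) q)
                        (msmD c x (fun _ => q) (i + 2) (k + 1) + msmC c q (x (i + 2)) q)) := by
                rw [msmD]
              rw [hE]
              rcases min_cases (msmD c x (fun _ => q) (i + 1) (k + 1) + |x (i + 2) - q|)
                  (min (msmD c x (fun _ => q) (i + 1) (k + 2) + msmC c (x (i + 2)) (x (i + 1)) q)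
                    (msmD c x (fun _ => q) (i + 2) (k + 1) + msmC c q (x (i + 2)) q)) with
                ⟨hm2, _⟩ | ⟨hm2, _⟩ <;> rw [hm2]
              · -- (E1, F1) : diagonal
                have hIH := IH i j k l (by omega)
                have hv : |((k : ℕ) + 1 : ℝ) - ((l : ℕ) + 1 : ℝ)| = |(k : ℝ) - (l : ℝ)| := by
                  push_cast; ring_nf
                have ht1 := tri q (x (i + 2)) (y (j + 2))
                have ht2 := tri q (x (i + 1)) (y (j + 1))
                push_cast at hIH hv ⊢
                rw [hv]
                linarith
              · rcases min_cases
                    (msmD c x (fun _ => q) (i + 1) (k + 2) + msmC c (x (i + 2)) (x (i + 1)) q)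
                    (msmD c x (fun _ => q) (i + 2) (k + 1) + msmC c q (x (i + 2)) q) with
                  ⟨hm3, _⟩ | ⟨hm3, _⟩ <;> rw [hm3]
                · -- (E2, F1) : use hD2, IH with F whole, then F ≤ F1
                  have hIH := IH i (j + 1) (k + 1) (l + 1) (by omega)
                  have hstep := msmC_step c (x (i + 2)) (x (i + 1)) (y (j + 2)) q
                  push_cast at hIH ⊢
                  linarith
                · -- (E3, F1)
                  have hIH := IH (i + 1) (j + 1) k (l + 1) (by omega)
                  rw [msmC_qq]
                  have habs : |(k : ℝ) - ((l : ℝ) + 1)| ≤ |(k : ℝ) + 1 - ((l : ℝ) + 1)| + 1 :=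
                    absK' _ _
                  have habs' : |(k : ℝ) + 1 - ((l : ℝ) + 1)| * c
                      ≥ |(k : ℝ) - ((l : ℝ) + 1)| * c - c := by
                    nlinarith [mul_le_mul_of_nonneg_right habs hc]
                  have hEF := hFle1
                  rw [hF, hm1] at hEF
                  push_cast at hIH ⊢
                  linarith
            · rcases min_cases
                  (msmD c y (fun _ => q) (j + 1) (l + 2) + msmC c (y (j + 2)) (y (j + 1)) q)
                  (msmD c y (fun _ => q) (j + 2) (l + 1) + msmC c q (y (j + 2)) q) with
                ⟨hm2, _⟩ | ⟨hm2, _⟩ <;> rw [hm2]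
              · -- branch F2 : use hD3, E whole
                have hIH := IH (i + 1) j (k + 1) (l + 1) (by omega)
                have hcomm : msmC c (y (j + 2)) (x (i + 2)) (y (j + 1))
                    = msmC c (y (j + 2)) (y (j + 1)) (x (i + 2)) := msmC_comm _ _ _ _
                have hstep := msmC_step c (y (j + 2)) (y (j + 1)) (x (i + 2)) q
                have ht1 := abs_sub_comm (y (j + 2)) (x (i + 2))
                have ht2 := abs_sub_comm (y (j + 1)) (x (i + 2))
                rw [hcomm] at hD3
                push_cast at hIH ⊢
                linarith
              · -- branch F3
                have hIH := IH (i + 1) (j + 1) (k + 1) l (by omega)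
                rw [msmC_qq]
                have habs : |(k : ℝ) + 1 - (l : ℝ)| ≤ |(k : ℝ) + 1 - ((l : ℝ) + 1)| + 1 :=
                  absK _ _
                have habs' : |(k : ℝ) + 1 - ((l : ℝ) + 1)| * c
                    ≥ |(k : ℝ) + 1 - (l : ℝ)| * c - c := by
                  nlinarith [mul_le_mul_of_nonneg_right habs hc]
                push_cast at hIH ⊢
                linarith

/-- The triangle heuristic is an upper bound:
`d(x,y) ≤ d(x, q^(m)) + d(y, q^(n)) + (m - n)·c` for `m ≥ n`. -/
theorem msm_triangle_heuristic (c : ℝ) (hc : 0 ≤ c) (x y : ℕ → ℝ) (m n : ℕ)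
    (hn : 1 ≤ n) (hmn : n ≤ m) (q : ℝ) :
    msmD c x y m n ≤
      msmD c x (fun _ => q) m m + msmD c y (fun _ => q) n n + ((m : ℝ) - (n : ℝ)) * c := by
  obtain ⟨i, rfl⟩ : ∃ i, m = i + 1 := ⟨m - 1, by omega⟩
  obtain ⟨j, rfl⟩ : ∃ j, n = j + 1 := ⟨n - 1, by omega⟩
  have key := msm_key c q hc x y (i + j + i + j) i j i j (le_refl _)
  have ht := tri q (x (i + 1)) (y (j + 1))
  have hij : (j : ℝ) ≤ (i : ℝ) := by exact_mod_cast (by omega : j ≤ i)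
  have hv : |(i : ℝ) - (j : ℝ)| = (i : ℝ) - (j : ℝ) := abs_of_nonneg (by linarith)
  have hcast : ((i : ℕ) + 1 : ℝ) - ((j : ℕ) + 1 : ℝ) = (i : ℝ) - (j : ℝ) := by push_cast; ring
  rw [hv] at key
  push_cast
  linarith
end

section
/- (Soundness of the pruning band.) Let c ≥ 0 and let x = (x_1,…,x_m) and y = (y_1,…,y_n) be time series. Then for all 1 ≤ i ≤ m and 1 ≤ j ≤ n, the table entry satisfies D[i,j] ≥ |i − j|·c. In particular, if UB is a real number with UB ≥ d(x,y) and |i − j|·c > UB, then D[i,j] > d(x,y), so the entry [i,j] cannot determine the optimal distance. -/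
lemma msmC_ge (c : ℝ) (hc : 0 ≤ c) (u v w : ℝ) : c ≤ msmC c u v w := by
  unfold msmC
  split
  · exact le_refl _
  · have h1 : (0:ℝ) ≤ |u - v| := abs_nonneg _
    have h2 : (0:ℝ) ≤ |u - w| := abs_nonneg _
    have : (0:ℝ) ≤ min |u - v| |u - w| := le_min h1 h2
    linarith

lemma abs_band_step (a b : ℝ) : |a - b| ≤ |a - 1 - b| + 1 := by
  have := abs_add_le (a - 1 - b) 1
  have e : a - 1 - b + 1 = a - b := by ring
  rw [e] at this
  simpa using this

theorem msmD_band (c : ℝ) (hc : 0 ≤ c) (x y : ℕ → ℝ) :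
    ∀ i j : ℕ, 1 ≤ i → 1 ≤ j → |(i : ℝ) - (j : ℝ)| * c ≤ msmD c x y i j
  | 0, _, hi, _ => by omega
  | _ + 1, 0, _, hj => by omega
  | 1, 1, _, _ => by
      simp [msmD]
  | i + 2, 1, _, _ => by
      have ih := msmD_band c hc x y (i + 1) 1 (by omega) (by omega)
      have hC := msmC_ge c hc (x (i + 2)) (x (i + 1)) (y 1)
      rw [msmD]
      have habs : |((i:ℝ) + 2) - 1| ≤ |((i:ℝ) + 1) - 1| + 1 := by
        have := abs_band_step ((i:ℝ) + 2) 1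
        have e : (i:ℝ) + 2 - 1 - 1 = (i:ℝ) + 1 - 1 := by ring
        rw [e] at this; exact this
      have hmul := mul_le_mul_of_nonneg_right habs hc
      push_cast
      push_cast at ih
      nlinarith
  | 1, j + 2, _, _ => by
      have ih := msmD_band c hc x y 1 (j + 1) (by omega) (by omega)
      have hC := msmC_ge c hc (y (j + 2)) (x 1) (y (j + 1))
      rw [msmD]
      have habs : |(1:ℝ) - ((j:ℝ) + 2)| ≤ |(1:ℝ) - ((j:ℝ) + 1)| + 1 := by
        have h := abs_sub ((1:ℝ) - ((j:ℝ) + 1)) 1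
        have e : (1:ℝ) - ((j:ℝ) + 1) - 1 = (1:ℝ) - ((j:ℝ) + 2) := by ring
        rw [e, abs_one] at h
        exact h
      have hmul := mul_le_mul_of_nonneg_right habs hc
      push_cast
      push_cast at ih
      nlinarith
  | i + 2, j + 2, _, _ => by
      have ih1 := msmD_band c hc x y (i + 1) (j + 1) (by omega) (by omega)
      have ih2 := msmD_band c hc x y (i + 1) (j + 2) (by omega) (by omega)
      have ih3 := msmD_band c hc x y (i + 2) (j + 1) (by omega) (by omega)
      have hC2 := msmC_ge c hc (x (i + 2)) (x (i + 1)) (y (j + 2))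
      have hC3 := msmC_ge c hc (y (j + 2)) (x (i + 2)) (y (j + 1))
      rw [msmD]
      push_cast at ih1 ih2 ih3 ⊢
      refine le_min ?_ (le_min ?_ ?_)
      · have e : |((i:ℝ) + 2) - ((j:ℝ) + 2)| = |((i:ℝ) + 1) - ((j:ℝ) + 1)| := by
          congr 1; ring
        have := abs_nonneg (x (i + 2) - y (j + 2))
        rw [e]; linarith
      · have habs : |((i:ℝ) + 2) - ((j:ℝ) + 2)| ≤ |((i:ℝ) + 1) - ((j:ℝ) + 2)| + 1 := by
          have := abs_band_step ((i:ℝ) + 2) ((j:ℝ) + 2)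
          have e : (i:ℝ) + 2 - 1 - ((j:ℝ) + 2) = (i:ℝ) + 1 - ((j:ℝ) + 2) := by ring
          rw [e] at this; exact this
        have hmul := mul_le_mul_of_nonneg_right habs hc
        nlinarith
      · have habs : |((i:ℝ) + 2) - ((j:ℝ) + 2)| ≤ |((i:ℝ) + 2) - ((j:ℝ) + 1)| + 1 := by
          have h := abs_sub ((i:ℝ) + 2 - ((j:ℝ) + 1)) 1
          have e : (i:ℝ) + 2 - ((j:ℝ) + 1) - 1 = (i:ℝ) + 2 - ((j:ℝ) + 2) := by ring
          rw [e, abs_one] at h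
          exact h
        have hmul := mul_le_mul_of_nonneg_right habs hc
        nlinarith
  termination_by i j => (i, j)

/-- Soundness of the pruning band: `D[i,j] ≥ |i − j|·c` for all valid `i, j`;
in particular, if `UB ≥ d(x,y)` and `|i − j|·c > UB`, then `D[i,j] > d(x,y)`,
so entry `[i,j]` cannot determine the optimal distance. -/
theorem msm_pruning_band_sound (c : ℝ) (hc : 0 ≤ c) (x y : ℕ → ℝ) (m n : ℕ)
    (hm : 1 ≤ m) (hn : 1 ≤ n) :
    (∀ i j, 1 ≤ i → i ≤ m → 1 ≤ j → j ≤ n →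
      |(i : ℝ) - (j : ℝ)| * c ≤ msmD c x y i j) ∧
    (∀ UB : ℝ, msmD c x y m n ≤ UB →
      ∀ i j, 1 ≤ i → i ≤ m → 1 ≤ j → j ≤ n → UB < |(i : ℝ) - (j : ℝ)| * c →
        msmD c x y m n < msmD c x y i j) := by
  constructor
  · intro i j hi _ hj _
    exact msmD_band c hc x y i j hi hj
  · intro UB hUB i j hi him hj hjn hlt
    calc msmD c x y m n ≤ UB := hUB
      _ < |(i : ℝ) - (j : ℝ)| * c := hlt
      _ ≤ msmD c x y i j := msmD_band c hc x y i j hi hj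
end

section
/- (Triangle inequality of the MSM distance, used by the triangle heuristic and the lower bound LB_t.) Let c ≥ 0 and let x, y, z be time series. Then d(x,z) ≤ d(x,y) + d(y,z). -/
/-- Distance from `u` to the segment spanned by `a` and `b`, written as a
Gromov-product-like formula. -/
noncomputable def sdist (u a b : ℝ) : ℝ := (|u - a| + |u - b| - |a - b|) / 2

lemma sdist_nonneg (u a b : ℝ) : 0 ≤ sdist u a b := by
  have h := abs_sub_le a u b
  have h1 := abs_sub_comm a u
  unfold sdist; linarith

lemma msmC_eq (c u v w : ℝ) : msmC c u v w = c + sdist u v w := by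
  unfold msmC sdist
  split_ifs with h
  · rcases h with ⟨h1, h2⟩ | ⟨h1, h2⟩
    · rw [abs_of_nonneg (by linarith : (0:ℝ) ≤ u - v),
        abs_of_nonpos (by linarith : u - w ≤ 0),
        abs_of_nonpos (by linarith : v - w ≤ 0)]
      ring
    · rw [abs_of_nonpos (by linarith : u - v ≤ 0),
        abs_of_nonneg (by linarith : (0:ℝ) ≤ u - w),
        abs_of_nonneg (by linarith : (0:ℝ) ≤ v - w)]
      ring
  · push_neg at h
    obtain ⟨h1, h2⟩ := h
    rcases le_total u v with hv | hv
    · rcases le_total u w with hw | hw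
      · rw [abs_of_nonpos (by linarith : u - v ≤ 0),
          abs_of_nonpos (by linarith : u - w ≤ 0)]
        rcases le_total v w with hvw | hvw
        · rw [abs_of_nonpos (by linarith : v - w ≤ 0),
            min_eq_left (by linarith : -(u - v) ≤ -(u - w))]
          ring
        · rw [abs_of_nonneg (by linarith : (0:ℝ) ≤ v - w),
            min_eq_right (by linarith : -(u - w) ≤ -(u - v))]
          ring
      · exfalso; have := h2 hw; linarith
    · rcases le_total u w with hw | hw
      · exfalso; have := h1 hv; linarith
      · rw [abs_of_nonneg (by linarith : (0:ℝ) ≤ u - v),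
          abs_of_nonneg (by linarith : (0:ℝ) ≤ u - w)]
        rcases le_total v w with hvw | hvw
        · rw [abs_of_nonpos (by linarith : v - w ≤ 0),
            min_eq_right (by linarith : u - w ≤ u - v)]
          ring
        · rw [abs_of_nonneg (by linarith : (0:ℝ) ≤ v - w),
            min_eq_left (by linarith : u - v ≤ u - w)]
          ring

section LocalLemmas

variable (a A b B u U : ℝ)

lemma msmL1 : |a - u| + sdist b a u ≤ |a - b| + |b - u| := by
  have h1 := abs_sub_le a b u
  have h2 := abs_sub_comm b a
  unfold sdist; linarith

lemma msmL2 : sdist a A u + sdist b a u ≤ sdist b A u + sdist a A b := by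
  have h1 := abs_sub_comm b a
  have h2 := abs_sub_comm A b
  unfold sdist; linarith

lemma msmL3 : sdist u a U + sdist b a u ≤ sdist b a U + sdist u b U := by
  have h1 := abs_sub_comm b u
  have h2 := abs_sub_comm a u
  unfold sdist; linarith

lemma msmL12 : sdist a A u + sdist b a u ≤ sdist B A u + |a - b| + sdist b B u := by
  have h1 := abs_sub_le a b B
  have h2 := abs_sub_le a B A
  have h3 := abs_sub_comm b a
  have h4 := abs_sub_comm B A
  have h5 := abs_sub_comm B b
  unfold sdist; linarith

lemma msmL31 : sdist u a U + sdist b a u ≤ sdist B a U + sdist b a B + |b - u| := by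
  have h1 := abs_sub_le u b B
  have h2 := abs_sub_le u B U
  have h3 := abs_sub_comm a u
  have h4 := abs_sub_comm b u
  have h5 := abs_sub_comm b B
  have h6 := abs_sub_comm a B
  unfold sdist; linarith

lemma msmL32 : sdist b a u ≤ sdist B a u + sdist b a B + sdist b B u := by
  have h1 := abs_sub_comm a B
  have h2 := abs_nonneg (b - B)
  unfold sdist; linarith

end LocalLemmas

section Steps

variable (c : ℝ) (x z : ℕ → ℝ)

lemma msmD_step_diag (i k : ℕ) :
    msmD c x z (i + 2) (k + 2) ≤ msmD c x z (i + 1) (k + 1) + |x (i + 2) - z (k + 2)| := by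
  rw [msmD]; exact min_le_left _ _

lemma msmD_step_vert (i k : ℕ) (hk : 1 ≤ k) :
    msmD c x z (i + 2) k ≤ msmD c x z (i + 1) k + msmC c (x (i + 2)) (x (i + 1)) (z k) := by
  have h : k = 1 ∨ ∃ k', k = k' + 2 := by
    rcases k with _ | _ | k'
    · omega
    · exact Or.inl rfl
    · exact Or.inr ⟨k', rfl⟩
  rcases h with rfl | ⟨k', rfl⟩
  · rw [msmD]
  · rw [msmD]
    exact le_trans (min_le_right _ _) (min_le_left _ _)

lemma msmD_step_horiz (m k : ℕ) (hm : 1 ≤ m) :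
    msmD c x z m (k + 2) ≤ msmD c x z m (k + 1) + msmC c (z (k + 2)) (x m) (z (k + 1)) := by
  have h : m = 1 ∨ ∃ i, m = i + 2 := by
    rcases m with _ | _ | i
    · omega
    · exact Or.inl rfl
    · exact Or.inr ⟨i, rfl⟩
  rcases h with rfl | ⟨i, rfl⟩
  · rw [msmD]
  · rw [msmD]
    exact le_trans (min_le_right _ _) (min_le_right _ _)

lemma msmD_cases (i j : ℕ) :
    msmD c x z (i + 2) (j + 2) = msmD c x z (i + 1) (j + 1) + |x (i + 2) - z (j + 2)| ∨
    msmD c x z (i + 2) (j + 2) = msmD c x z (i + 1) (j + 2) + msmC c (x (i + 2)) (x (i + 1)) (z (j + 2)) ∨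
    msmD c x z (i + 2) (j + 2) = msmD c x z (i + 2) (j + 1) + msmC c (z (j + 2)) (x (i + 2)) (z (j + 1)) := by
  rw [msmD]
  rcases min_cases (msmD c x z (i + 1) (j + 1) + |x (i + 2) - z (j + 2)|)
      (min (msmD c x z (i + 1) (j + 2) + msmC c (x (i + 2)) (x (i + 1)) (z (j + 2)))
        (msmD c x z (i + 2) (j + 1) + msmC c (z (j + 2)) (x (i + 2)) (z (j + 1)))) with
    ⟨h, _⟩ | ⟨h, _⟩
  · exact Or.inl h
  · rw [h]
    rcases min_cases (msmD c x z (i + 1) (j + 2) + msmC c (x (i + 2)) (x (i + 1)) (z (j + 2)))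
        (msmD c x z (i + 2) (j + 1) + msmC c (z (j + 2)) (x (i + 2)) (z (j + 1))) with
      ⟨h', _⟩ | ⟨h', _⟩
    · exact Or.inr (Or.inl h')
    · exact Or.inr (Or.inr h')

end Steps

section Routes

variable {c : ℝ} {x y z : ℕ → ℝ}

/-- Route for the case where `D_xy` takes the vertical (x-merge) step. -/
lemma msmR2 (i n k : ℕ) (hk : 1 ≤ k)
    (IH : msmD c x z (i + 1) k + sdist (y n) (x (i + 1)) (z k) ≤
      msmD c x y (i + 1) n + msmD c y z n k) :
    msmD c x z (i + 2) k + sdist (y n) (x (i + 2)) (z k) ≤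
      (msmD c x y (i + 1) n + msmC c (x (i + 2)) (x (i + 1)) (y n)) + msmD c y z n k := by
  have hs := msmD_step_vert c x z i k hk
  rw [msmC_eq] at hs
  rw [msmC_eq]
  have hL := msmL2 (x (i + 2)) (x (i + 1)) (y n) (z k)
  linarith

/-- Route for the case where `D_yz` takes the horizontal (z-merge) step. -/
lemma msmR3 (m n k : ℕ) (hm : 1 ≤ m)
    (IH : msmD c x z m (k + 1) + sdist (y n) (x m) (z (k + 1)) ≤
      msmD c x y m n + msmD c y z n (k + 1)) :
    msmD c x z m (k + 2) + sdist (y n) (x m) (z (k + 2)) ≤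
      msmD c x y m n + (msmD c y z n (k + 1) + msmC c (z (k + 2)) (y n) (z (k + 1))) := by
  have hs := msmD_step_horiz c x z m k hm
  rw [msmC_eq] at hs
  rw [msmC_eq]
  have hL := msmL3 (x m) (y n) (z (k + 2)) (z (k + 1))
  linarith

lemma msmR11 (i j k : ℕ)
    (IH : msmD c x z (i + 1) (k + 1) + sdist (y (j + 1)) (x (i + 1)) (z (k + 1)) ≤
      msmD c x y (i + 1) (j + 1) + msmD c y z (j + 1) (k + 1)) :
    msmD c x z (i + 2) (k + 2) + sdist (y (j + 2)) (x (i + 2)) (z (k + 2)) ≤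
      (msmD c x y (i + 1) (j + 1) + |x (i + 2) - y (j + 2)|) +
        (msmD c y z (j + 1) (k + 1) + |y (j + 2) - z (k + 2)|) := by
  have hs := msmD_step_diag c x z i k
  have hL := msmL1 (x (i + 2)) (y (j + 2)) (z (k + 2))
  have hn := sdist_nonneg (y (j + 1)) (x (i + 1)) (z (k + 1))
  linarith

lemma msmR12 (i j k : ℕ) (hk : 1 ≤ k)
    (IH : msmD c x z (i + 1) k + sdist (y (j + 1)) (x (i + 1)) (z k) ≤
      msmD c x y (i + 1) (j + 1) + msmD c y z (j + 1) k) :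
    msmD c x z (i + 2) k + sdist (y (j + 2)) (x (i + 2)) (z k) ≤
      (msmD c x y (i + 1) (j + 1) + |x (i + 2) - y (j + 2)|) +
        (msmD c y z (j + 1) k + msmC c (y (j + 2)) (y (j + 1)) (z k)) := by
  have hs := msmD_step_vert c x z i k hk
  rw [msmC_eq] at hs
  rw [msmC_eq]
  have hL := msmL12 (x (i + 2)) (x (i + 1)) (y (j + 2)) (y (j + 1)) (z k)
  linarith

lemma msmR31 (m j k : ℕ) (hm : 1 ≤ m)
    (IH : msmD c x z m (k + 1) + sdist (y (j + 1)) (x m) (z (k + 1)) ≤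
      msmD c x y m (j + 1) + msmD c y z (j + 1) (k + 1)) :
    msmD c x z m (k + 2) + sdist (y (j + 2)) (x m) (z (k + 2)) ≤
      (msmD c x y m (j + 1) + msmC c (y (j + 2)) (x m) (y (j + 1))) +
        (msmD c y z (j + 1) (k + 1) + |y (j + 2) - z (k + 2)|) := by
  have hs := msmD_step_horiz c x z m k hm
  rw [msmC_eq] at hs
  rw [msmC_eq]
  have hL := msmL31 (x m) (y (j + 2)) (y (j + 1)) (z (k + 2)) (z (k + 1))
  linarith

lemma msmR32 (m j p : ℕ) (hc : 0 ≤ c)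
    (IH : msmD c x z m p + sdist (y (j + 1)) (x m) (z p) ≤
      msmD c x y m (j + 1) + msmD c y z (j + 1) p) :
    msmD c x z m p + sdist (y (j + 2)) (x m) (z p) ≤
      (msmD c x y m (j + 1) + msmC c (y (j + 2)) (x m) (y (j + 1))) +
        (msmD c y z (j + 1) p + msmC c (y (j + 2)) (y (j + 1)) (z p)) := by
  rw [msmC_eq, msmC_eq]
  have hL := msmL32 (x m) (y (j + 2)) (y (j + 1)) (z p)
  linarith

end Routes

lemma msm_star (c : ℝ) (hc : 0 ≤ c) (x y z : ℕ → ℝ) :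
    ∀ N m n p : ℕ, m + n + p ≤ N → 1 ≤ m → 1 ≤ n → 1 ≤ p →
      msmD c x z m p + sdist (y n) (x m) (z p) ≤ msmD c x y m n + msmD c y z n p := by
  intro N
  induction N with
  | zero => intro m n p h hm _ _; omega
  | succ N IH =>
    intro m n p hN hm hn hp
    have hcn : n = 1 ∨ ∃ j, n = j + 2 := by
      rcases n with _ | _ | j
      · omega
      · exact Or.inl rfl
      · exact Or.inr ⟨j, rfl⟩
    have hcm : m = 1 ∨ ∃ i, m = i + 2 := by
      rcases m with _ | _ | i
      · omega
      · exact Or.inl rfl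
      · exact Or.inr ⟨i, rfl⟩
    have hcp : p = 1 ∨ ∃ k, p = k + 2 := by
      rcases p with _ | _ | k
      · omega
      · exact Or.inl rfl
      · exact Or.inr ⟨k, rfl⟩
    rcases hcn with rfl | ⟨j, rfl⟩
    · -- n = 1
      rcases hcm with rfl | ⟨i, rfl⟩
      · rcases hcp with rfl | ⟨k, rfl⟩
        · -- 1 1 1
          rw [msmD, msmD, msmD]
          exact msmL1 (x 1) (y 1) (z 1)
        · -- 1 1 (k+2)
          rw [show msmD c y z 1 (k + 2) =
              msmD c y z 1 (k + 1) + msmC c (z (k + 2)) (y 1) (z (k + 1)) from by rw [msmD]]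
          exact msmR3 1 1 k le_rfl (IH 1 1 (k + 1) (by omega) le_rfl le_rfl (by omega))
      · -- (i+2) 1 p
        rw [show msmD c x y (i + 2) 1 =
            msmD c x y (i + 1) 1 + msmC c (x (i + 2)) (x (i + 1)) (y 1) from by rw [msmD]]
        exact msmR2 i 1 p hp (IH (i + 1) 1 p (by omega) (by omega) le_rfl hp)
    · -- n = j + 2
      have hxy1 : msmD c x y 1 (j + 2) =
          msmD c x y 1 (j + 1) + msmC c (y (j + 2)) (x 1) (y (j + 1)) := by rw [msmD]
      have hyz1 : msmD c y z (j + 2) 1 =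
          msmD c y z (j + 1) 1 + msmC c (y (j + 2)) (y (j + 1)) (z 1) := by rw [msmD]
      rcases hcp with rfl | ⟨k, rfl⟩
      · -- p = 1
        rw [hyz1]
        rcases hcm with rfl | ⟨i, rfl⟩
        · rw [hxy1]
          exact msmR32 1 j 1 hc (IH 1 (j + 1) 1 (by omega) le_rfl (by omega) le_rfl)
        · rcases msmD_cases c x y i j with hA | hA | hA <;> rw [hA]
          · exact msmR12 i j 1 le_rfl (IH (i + 1) (j + 1) 1 (by omega) (by omega) (by omega) le_rfl)
          · rw [← hyz1]
            exact msmR2 i (j + 2) 1 le_rfl (IH (i + 1) (j + 2) 1 (by omega) (by omega) (by omega) le_rfl)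
          · exact msmR32 (i + 2) j 1 hc (IH (i + 2) (j + 1) 1 (by omega) (by omega) (by omega) le_rfl)
      · -- p = k + 2
        rcases hcm with rfl | ⟨i, rfl⟩
        · rw [hxy1]
          rcases msmD_cases c y z j k with hB | hB | hB <;> rw [hB]
          · exact msmR31 1 j k le_rfl (IH 1 (j + 1) (k + 1) (by omega) le_rfl (by omega) (by omega))
          · exact msmR32 1 j (k + 2) hc (IH 1 (j + 1) (k + 2) (by omega) le_rfl (by omega) (by omega))
          · rw [← hxy1]
            exact msmR3 1 (j + 2) k le_rfl (IH 1 (j + 2) (k + 1) (by omega) le_rfl (by omega) (by omega))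
        · rcases msmD_cases c x y i j with hA | hA | hA
          · rw [hA]
            rcases msmD_cases c y z j k with hB | hB | hB <;> rw [hB]
            · exact msmR11 i j k (IH (i + 1) (j + 1) (k + 1) (by omega) (by omega) (by omega) (by omega))
            · exact msmR12 i j (k + 2) (by omega) (IH (i + 1) (j + 1) (k + 2) (by omega) (by omega) (by omega) (by omega))
            · rw [← hA]
              exact msmR3 (i + 2) (j + 2) k (by omega) (IH (i + 2) (j + 2) (k + 1) (by omega) (by omega) (by omega) (by omega))
          · rw [hA]
            exact msmR2 i (j + 2) (k + 2) (by omega) (IH (i + 1) (j + 2) (k + 2) (by omega) (by omega) (by omega) (by omega))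
          · rw [hA]
            rcases msmD_cases c y z j k with hB | hB | hB <;> rw [hB]
            · exact msmR31 (i + 2) j k (by omega) (IH (i + 2) (j + 1) (k + 1) (by omega) (by omega) (by omega) (by omega))
            · exact msmR32 (i + 2) j (k + 2) hc (IH (i + 2) (j + 1) (k + 2) (by omega) (by omega) (by omega) (by omega))
            · rw [← hA]
              exact msmR3 (i + 2) (j + 2) k (by omega) (IH (i + 2) (j + 2) (k + 1) (by omega) (by omega) (by omega) (by omega))

/-- Triangle inequality of the MSM distance: `d(x,z) ≤ d(x,y) + d(y,z)`. -/
theorem msm_triangle (c : ℝ) (hc : 0 ≤ c) (x y z : ℕ → ℝ) (m n p : ℕ)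
    (hm : 1 ≤ m) (hn : 1 ≤ n) (hp : 1 ≤ p) :
    msmD c x z m p ≤ msmD c x y m n + msmD c y z n p := by
  have h := msm_star c hc x y z (m + n + p) m n p le_rfl hm hn hp
  have h0 := sdist_nonneg (y n) (x m) (z p)
  linarith
end
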